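/- arXiv:1401.0179 — 3 statements merged into one kernel-verified Lean document; each statement's English description precedes it below -/
import Mathlib

section
/- For finite standard sets Δ, Δ' ⊆ ℕ², the C4 sum in the first direction Δ +₁ Δ' := { α ∈ ℕ² : α₁ < |{β ∈ Δ : β₂ = α₂}| + |{β ∈ Δ' : β₂ = α₂}| } is again a standard set. -/
def IsStandardSet (Δ : Set (ℕ × ℕ)) : Prop :=
  ∀ γ : ℕ × ℕ, γ ∉ Δ → ∀ δ : ℕ × ℕ, γ + δ ∉ Δ

/-- C4 sum in the first direction. -/
def c4fst (Δ Δ' : Set (ℕ × ℕ)) : Set (ℕ × ℕ) :=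
  {α : ℕ × ℕ | α.1 < ({β ∈ Δ | β.2 = α.2}).ncard + ({β ∈ Δ' | β.2 = α.2}).ncard}

theorem stmt1 (Δ Δ' : Set (ℕ × ℕ)) (hΔ : IsStandardSet Δ) (hΔ' : IsStandardSet Δ')
    (hf : Δ.Finite) (hf' : Δ'.Finite) :
    IsStandardSet (c4fst Δ Δ') := by
  have key : ∀ (S : Set (ℕ × ℕ)), IsStandardSet S → S.Finite → ∀ y d : ℕ,
      ({β ∈ S | β.2 = y + d}).ncard ≤ ({β ∈ S | β.2 = y}).ncard := by
    intro S hS hSf y d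
    apply Set.ncard_le_ncard_of_injOn (fun β => (β.1, y)) ?_ ?_
      (hSf.subset (fun β hβ => hβ.1))
    · rintro ⟨x, y'⟩ ⟨hmem, hy⟩
      simp only at hy
      subst hy
      refine ⟨?_, rfl⟩
      by_contra hxy
      exact hS (x, y) hxy (0, d) (by simpa using hmem)
    · rintro ⟨a, b⟩ ⟨ha, hb⟩ ⟨a', b'⟩ ⟨ha', hb'⟩ h
      simp only at hb hb'
      simp only [Prod.mk.injEq] at h
      simp [h.1, hb, hb']
  intro γ hγ δ
  simp only [c4fst, Set.mem_setOf_eq, not_lt] at hγ ⊢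
  calc ({β ∈ Δ | β.2 = (γ + δ).2}).ncard + ({β ∈ Δ' | β.2 = (γ + δ).2}).ncard
      ≤ ({β ∈ Δ | β.2 = γ.2}).ncard + ({β ∈ Δ' | β.2 = γ.2}).ncard :=
        Nat.add_le_add (key Δ hΔ hf γ.2 δ.2) (key Δ' hΔ' hf' γ.2 δ.2)
    _ ≤ γ.1 := hγ
    _ ≤ (γ + δ).1 := Nat.le_add_right _ _
end

section
/- Let I₀, …, I_m be ideals of ℂ[x₁, x₂] of finite colength, with lex standard sets Δ₀, …, Δ_m, such that S/Iⱼ is supported on the horizontal line x₂ = λⱼ with the λⱼ pairwise distinct. Then the lexicographic initial ideal of I := I₀ ∩ ⋯ ∩ I_m is M_Δ, where Δ = Δ₀ +₂ ⋯ +₂ Δ_m is the C4 sum in the second direction. -/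
open MvPolynomial

/-- The pair of exponents of a monomial of `ℂ[x₁, x₂]`, with `x₁ = X 0`, `x₂ = X 1`. -/
def expPair (d : Fin 2 →₀ ℕ) : ℕ × ℕ := (d 0, d 1)

/-- The set of lexicographic leading exponents (lex order with `x₁ > x₂`) of the nonzero
elements of an ideal `I ⊆ ℂ[x₁, x₂]`.  One has `in_lex(I) = M_Δ` exactly when this set is
the complement of the standard set `Δ`. -/
def leadSet (I : Ideal (MvPolynomial (Fin 2) ℂ)) : Set (ℕ × ℕ) :=
  {α | ∃ f ∈ I, f ≠ 0 ∧ (∃ d ∈ f.support, expPair d = α) ∧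
    ∀ d ∈ f.support, toLex (expPair d) ≤ toLex α}

/-- The vanishing set in `𝔸²(ℂ)` of an ideal of `ℂ[x₁, x₂]`. -/
def zeroSet (I : Ideal (MvPolynomial (Fin 2) ℂ)) : Set (ℂ × ℂ) :=
  {z | ∀ f ∈ I, MvPolynomial.eval ![z.1, z.2] f = 0}

/-!
View `ℂ[x₁, x₂]` as `ℂ[x₂][x₁]`. Then `(a, b)` is a lex leading exponent of an ideal `I` iff the
ideal `L_a(I) ⊆ ℂ[x₂]` of `x₁^a`-coefficients of the elements of `I` of `x₁`-degree at most `a`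
(`Ideal.leadingCoeffNth`) contains a polynomial of degree `b`. For each `Iⱼ` the Nullstellensatz puts a power of `x₂ - λⱼ`
into `Iⱼ`, so the principal ideal `L_a(Iⱼ)` is generated by a power `(x₂ - λⱼ)^nⱼ`, and `nⱼ` is the
height of column `a` of `Δⱼ`. Since these powers of `x₂ - λⱼ` are pairwise coprime, a
Chinese-remainder argument shows that `L_a` commutes with the intersection, so
`L_a(I) = (∏ⱼ (x₂ - λⱼ)^nⱼ)`, whose nonzero elements have exactly the degrees `b ≥ ∑ⱼ nⱼ`.
-/

theorem Set.ncard_sep_fst_eq {Δ : Set (ℕ × ℕ)} {a i : ℕ} (h : ∀ b, (a, b) ∈ Δ ↔ b < i) :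
    {β ∈ Δ | β.1 = a}.ncard = i := by
  have : {β ∈ Δ | β.1 = a} = (Prod.mk a) '' ↑(Finset.range i) := by
    ext ⟨a', b⟩
    simp only [Set.mem_ofPred_eq, Finset.coe_range, Set.mem_image, Set.mem_Iio, Prod.mk.injEq]
    constructor
    · rintro ⟨hb, rfl⟩; exact ⟨b, (h b).1 hb, rfl, rfl⟩
    · rintro ⟨b, hb, rfl, rfl⟩; exact ⟨(h b).2 hb, rfl⟩
  rw [this, Set.ncard_image_of_injective _ (Prod.mk_right_injective a), Set.ncard_coe_finset,
    Finset.card_range]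

namespace Polynomial

section LeadingCoeffNth

variable {R : Type*} [CommRing R]

theorem _root_.Ideal.mem_leadingCoeffNth_iff_coeff (J : Ideal R[X]) (n : ℕ) (x : R) :
    x ∈ J.leadingCoeffNth n ↔ ∃ p ∈ J, p.degree ≤ n ∧ p.coeff n = x := by
  simp only [Ideal.leadingCoeffNth, Ideal.degreeLE, Submodule.mem_map, Submodule.mem_inf,
    mem_degreeLE, Ideal.mem_ofPolynomial, lcoeff_apply]
  exact exists_congr fun p => by tauto

theorem _root_.Ideal.leadingCoeffNth_top (n : ℕ) : (⊤ : Ideal R[X]).leadingCoeffNth n = ⊤ :=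
  (Ideal.eq_top_iff_one _).2 <| (Ideal.mem_leadingCoeffNth _ _ _).2
    ⟨1, Submodule.mem_top, degree_one_le.trans (WithBot.coe_le_coe.2 n.zero_le), leadingCoeff_one⟩

theorem degree_mul_C_le_of_le {p : R[X]} {n : WithBot ℕ} (hp : p.degree ≤ n) (a : R) :
    (p * C a).degree ≤ n :=
  (degree_mul_le _ _).trans ((add_le_add hp degree_C_le).trans (by rw [add_zero]))

/-- A Chinese-remainder argument: if `u + v = 1` with `C u ∈ J`, `C v ∈ K`, and `F ∈ J`, `G ∈ K`
have the same `n`-th coefficient, then so does `F * C v + G * C u ∈ J ⊓ K`. -/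
theorem _root_.Ideal.leadingCoeffNth_inf {J K : Ideal R[X]}
    (h : IsCoprime (J.comap C) (K.comap C)) (n : ℕ) :
    (J ⊓ K).leadingCoeffNth n = J.leadingCoeffNth n ⊓ K.leadingCoeffNth n := by
  simp only [SetLike.ext_iff, Submodule.mem_inf, Ideal.mem_leadingCoeffNth_iff_coeff]
  refine fun x => ⟨fun ⟨F, ⟨hFJ, hFK⟩, hF⟩ => ⟨⟨F, hFJ, hF⟩, ⟨F, hFK, hF⟩⟩, ?_⟩
  rintro ⟨⟨F, hFJ, hFdeg, hFx⟩, ⟨G, hGK, hGdeg, hGx⟩⟩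
  obtain ⟨u, hu, v, hv, huv⟩ := Ideal.isCoprime_iff_exists.1 h
  refine ⟨F * C v + G * C u, ⟨?_, ?_⟩, ?_, ?_⟩
  · exact add_mem (J.mul_mem_right _ hFJ) (J.mul_mem_left _ hu)
  · exact add_mem (K.mul_mem_left _ hv) (K.mul_mem_right _ hGK)
  · exact (degree_add_le _ _).trans
      (max_le (degree_mul_C_le_of_le hFdeg v) (degree_mul_C_le_of_le hGdeg u))
  · rw [coeff_add, coeff_mul_C, coeff_mul_C, hFx, hGx, ← mul_add, add_comm, huv, mul_one]

theorem _root_.Ideal.leadingCoeffNth_biInf {ι : Type*} {J : ι → Ideal R[X]} {s : Finset ι}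
    (h : (s : Set ι).Pairwise fun i j => IsCoprime ((J i).comap C) ((J j).comap C)) (n : ℕ) :
    (⨅ i ∈ s, J i).leadingCoeffNth n = ⨅ i ∈ s, (J i).leadingCoeffNth n := by
  classical
  induction s using Finset.induction_on with
  | empty => simpa using Ideal.leadingCoeffNth_top n
  | insert i s hi ih =>
    rw [Finset.coe_insert, Set.pairwise_insert_of_notMem (by exact_mod_cast hi)] at h
    rw [Finset.iInf_insert, Finset.iInf_insert, Ideal.leadingCoeffNth_inf, ih h.1]
    simp only [Ideal.comap_iInf]
    exact Ideal.isCoprime_biInf fun j hj => (h.2 j hj).1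

theorem exists_mem_span_singleton_natDegree_eq_iff [IsDomain R] {g : R[X]} (hg : g ≠ 0) (b : ℕ) :
    (∃ p ∈ Ideal.span {g}, p ≠ 0 ∧ p.natDegree = b) ↔ g.natDegree ≤ b := by
  simp only [Ideal.mem_span_singleton]
  constructor
  · rintro ⟨p, hgp, hp, rfl⟩
    exact natDegree_le_of_dvd hgp hp
  · intro hb
    refine ⟨g * X ^ (b - g.natDegree), dvd_mul_right _ _, mul_ne_zero hg (pow_ne_zero _ X_ne_zero), ?_⟩
    rw [natDegree_mul_X_pow _ hg]
    omega

theorem forall_coeff_coeff_ne_zero_toLex_le_iff (F : R[X][X]) (a b : ℕ) :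
    (∀ a' b', (F.coeff a').coeff b' ≠ 0 → toLex (a', b') ≤ toLex (a, b)) ↔
      F.degree ≤ a ∧ (F.coeff a).degree ≤ b := by
  simp only [Prod.Lex.toLex_le_toLex, degree_le_iff_coeff_zero, Nat.cast_lt]
  constructor
  · intro h
    refine ⟨fun a' ha' => ext fun b' => ?_, fun b' hb' => ?_⟩
    · by_contra hne
      have := h a' b' hne
      omega
    · by_contra hne
      have := h a b' hne
      omega
  · rintro ⟨ha, hb⟩ a' b' hne
    rcases lt_trichotomy a' a with h | rfl | h
    · exact Or.inl h
    · exact Or.inr ⟨rfl, not_lt.1 fun h => hne (hb b' h)⟩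
    · exact absurd (by rw [ha a' h, coeff_zero]) hne

end LeadingCoeffNth

theorem exists_span_eq_X_sub_C_pow {K : Type*} [Field K] {L : Ideal K[X]} {c : K} {N : ℕ}
    (h : (X - C c) ^ N ∈ L) : ∃ i, L = Ideal.span {(X - C c) ^ i} := by
  obtain ⟨g, rfl⟩ := (IsPrincipalIdealRing.principal L).principal
  obtain ⟨i, -, hi⟩ := (dvd_prime_pow (prime_X_sub_C c) N).1 (Ideal.mem_span_singleton.1 h)
  exact ⟨i, Ideal.span_singleton_eq_span_singleton.2 hi⟩

section Bivariate

variable (R : Type*) [CommRing R]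

/-- `ℂ[x₁, x₂] ≅ ℂ[x₂][x₁]`: `x₁ = X 0` becomes the outer variable, `x₂ = X 1` the variable of
the coefficients. -/
noncomputable def iterPolyEquiv : MvPolynomial (Fin 2) R ≃ₐ[R] R[X][X] :=
  (MvPolynomial.finSuccEquiv R 1).trans <| mapAlgEquiv <|
    (MvPolynomial.finSuccEquiv R 0).trans <| mapAlgEquiv <| MvPolynomial.isEmptyAlgEquiv R (Fin 0)

variable {R}

theorem coeff_coeff_iterPolyEquiv (f : MvPolynomial (Fin 2) R) (d : Fin 2 →₀ ℕ) :
    ((iterPolyEquiv R f).coeff (d 0)).coeff (d 1) = f.coeff d := by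
  have hd : Finsupp.cons (d 0) (Finsupp.cons (d 1) 0) = d := by
    ext i; fin_cases i <;> rfl
  conv_rhs => rw [← hd, ← MvPolynomial.finSuccEquiv_coeff_coeff,
    ← MvPolynomial.finSuccEquiv_coeff_coeff]
  simp [iterPolyEquiv]
  rfl

theorem iterPolyEquiv_X_one : iterPolyEquiv R (MvPolynomial.X 1) = C X := by
  rw [iterPolyEquiv, AlgEquiv.trans_apply, show (1 : Fin 2) = (0 : Fin 1).succ from rfl,
    MvPolynomial.finSuccEquiv_X_succ]
  simp [MvPolynomial.finSuccEquiv_X_zero]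

theorem iterPolyEquiv_C (c : R) : iterPolyEquiv R (MvPolynomial.C c) = C (C c) :=
  (iterPolyEquiv R).commutes c

theorem forall_mem_support_expPair_iff (f : MvPolynomial (Fin 2) R) (P : ℕ × ℕ → Prop) :
    (∀ d ∈ f.support, P (expPair d)) ↔
      ∀ a b, ((iterPolyEquiv R f).coeff a).coeff b ≠ 0 → P (a, b) := by
  refine ⟨fun h a b hab => h (Finsupp.equivFunOnFinite.symm ![a, b]) ?_,
    fun h d hd => h (d 0) (d 1) ?_⟩
  · rwa [MvPolynomial.mem_support_iff, ← coeff_coeff_iterPolyEquiv]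
  · rwa [coeff_coeff_iterPolyEquiv, ← MvPolynomial.mem_support_iff]

theorem exists_mem_support_expPair_eq_iff (f : MvPolynomial (Fin 2) R) (a b : ℕ) :
    (∃ d ∈ f.support, expPair d = (a, b)) ↔ ((iterPolyEquiv R f).coeff a).coeff b ≠ 0 := by
  refine ⟨fun ⟨d, hd, hda⟩ => ?_, fun h => ⟨Finsupp.equivFunOnFinite.symm ![a, b], ?_, rfl⟩⟩
  · obtain ⟨rfl, rfl⟩ : d 0 = a ∧ d 1 = b := Prod.ext_iff.1 hda
    rwa [coeff_coeff_iterPolyEquiv, ← MvPolynomial.mem_support_iff]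
  · rwa [MvPolynomial.mem_support_iff, ← coeff_coeff_iterPolyEquiv]

noncomputable def iterIdeal (I : Ideal (MvPolynomial (Fin 2) R)) : Ideal R[X][X] :=
  I.comap (iterPolyEquiv R).symm

theorem iterPolyEquiv_mem_iterIdeal {I : Ideal (MvPolynomial (Fin 2) R)}
    {f : MvPolynomial (Fin 2) R} : iterPolyEquiv R f ∈ iterIdeal I ↔ f ∈ I := by
  rw [iterIdeal, Ideal.mem_comap, AlgEquiv.symm_apply_apply]

theorem iterIdeal_iInf {ι : Type*} (I : ι → Ideal (MvPolynomial (Fin 2) R)) :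
    iterIdeal (⨅ i, I i) = ⨅ i, iterIdeal (I i) :=
  Ideal.comap_iInf _ _

end Bivariate

theorem mem_leadSet_iff {I : Ideal (MvPolynomial (Fin 2) ℂ)} {a b : ℕ} :
    (a, b) ∈ leadSet I ↔ ∃ p ∈ (iterIdeal I).leadingCoeffNth a, p ≠ 0 ∧ p.natDegree = b := by
  simp only [Ideal.mem_leadingCoeffNth_iff_coeff]
  constructor
  · rintro ⟨f, hf, -, hlead, hle⟩
    rw [exists_mem_support_expPair_eq_iff] at hlead
    rw [forall_mem_support_expPair_iff (P := fun α => toLex α ≤ toLex (a, b)),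
      forall_coeff_coeff_ne_zero_toLex_le_iff] at hle
    exact ⟨_, ⟨_, iterPolyEquiv_mem_iterIdeal.2 hf, hle.1, rfl⟩,
      fun h => hlead (by rw [h, coeff_zero]),
      natDegree_eq_of_le_of_coeff_ne_zero (natDegree_le_of_degree_le hle.2) hlead⟩
  · rintro ⟨_, ⟨F, hF, hFdeg, rfl⟩, hne, hb⟩
    refine ⟨(iterPolyEquiv ℂ).symm F, hF, fun h => hne ?_, ?_, ?_⟩
    · rw [← AlgEquiv.apply_symm_apply (iterPolyEquiv ℂ) F, h, map_zero, coeff_zero]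
    · rw [exists_mem_support_expPair_eq_iff, AlgEquiv.apply_symm_apply]
      exact hb ▸ mt leadingCoeff_eq_zero.1 hne
    · rw [forall_mem_support_expPair_iff (P := fun α => toLex α ≤ toLex (a, b)),
        AlgEquiv.apply_symm_apply, forall_coeff_coeff_ne_zero_toLex_le_iff]
      exact ⟨hFdeg, hb ▸ degree_le_natDegree⟩

/-- `x₂ - c` vanishes on `V(I)`, so by the Nullstellensatz a power of it lies in `I`. -/
theorem exists_C_pow_X_sub_C_mem_iterIdeal {I : Ideal (MvPolynomial (Fin 2) ℂ)} {c : ℂ}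
    (hsupp : ∀ z ∈ zeroSet I, z.2 = c) : ∃ N : ℕ, C ((X - C c) ^ N) ∈ iterIdeal I := by
  have hvan : MvPolynomial.X 1 - MvPolynomial.C c ∈
      MvPolynomial.vanishingIdeal ℂ (MvPolynomial.zeroLocus ℂ I) := by
    refine MvPolynomial.mem_vanishingIdeal_iff.2 fun w hw => ?_
    have hz : (w 0, w 1) ∈ zeroSet I := fun f hf => by
      have hw' : ![w 0, w 1] = w := by ext i; fin_cases i <;> rfl
      rw [hw']
      exact hw f hf
    simp [show w 1 = c from hsupp _ hz]
  rw [MvPolynomial.vanishingIdeal_zeroLocus_eq_radical] at hvan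
  obtain ⟨N, hN⟩ := hvan
  refine ⟨N, ?_⟩
  simpa [iterPolyEquiv_X_one, iterPolyEquiv_C] using iterPolyEquiv_mem_iterIdeal.2 hN

theorem leadingCoeffNth_iterIdeal_eq_span {I : Ideal (MvPolynomial (Fin 2) ℂ)}
    {Δ : Set (ℕ × ℕ)} {c : ℂ} {N : ℕ} (hin : leadSet I = Δᶜ)
    (hN : C ((X - C c) ^ N) ∈ iterIdeal I) (a : ℕ) :
    (iterIdeal I).leadingCoeffNth a = Ideal.span {(X - C c) ^ {β ∈ Δ | β.1 = a}.ncard} := by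
  have hmem : (X - C c) ^ N ∈ (iterIdeal I).leadingCoeffNth a :=
    (Ideal.mem_leadingCoeffNth _ _ _).2
      ⟨_, hN, degree_C_le.trans (WithBot.coe_le_coe.2 a.zero_le), leadingCoeff_C _⟩
  obtain ⟨i, hi⟩ := exists_span_eq_X_sub_C_pow hmem
  have hcol : ∀ b, (a, b) ∈ Δ ↔ b < i := fun b => by
    rw [← Set.notMem_compl_iff, ← hin, mem_leadSet_iff, hi,
      exists_mem_span_singleton_natDegree_eq_iff (pow_ne_zero _ (X_sub_C_ne_zero c)), not_le,
      natDegree_pow, natDegree_X_sub_C, mul_one]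
  rw [hi, Set.ncard_sep_fst_eq hcol]

theorem leadingCoeffNth_iterIdeal_iInf {ι : Type*} [Fintype ι]
    {I : ι → Ideal (MvPolynomial (Fin 2) ℂ)} {Δ : ι → Set (ℕ × ℕ)} {lam : ι → ℂ}
    (hin : ∀ j, leadSet (I j) = (Δ j)ᶜ) (hsupp : ∀ j, ∀ z ∈ zeroSet (I j), z.2 = lam j)
    (hdist : Function.Injective lam) (a : ℕ) :
    (iterIdeal (⨅ j, I j)).leadingCoeffNth a =
      Ideal.span {∏ j, (X - C (lam j)) ^ {β ∈ Δ j | β.1 = a}.ncard} := by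
  choose N hN using fun j => exists_C_pow_X_sub_C_mem_iterIdeal (hsupp j)
  have hcop : ∀ i j, i ≠ j →
      IsCoprime ((iterIdeal (I i)).comap C) ((iterIdeal (I j)).comap C) := fun i j hij => by
    have h := (Ideal.isCoprime_span_singleton_iff _ _).2
      ((pairwise_coprime_X_sub_C hdist hij).pow (m := N i) (n := N j))
    rw [Ideal.isCoprime_iff_codisjoint] at h ⊢
    exact h.mono ((Ideal.span_singleton_le_iff_mem _).2 (hN i))
      ((Ideal.span_singleton_le_iff_mem _).2 (hN j))
  rw [iterIdeal_iInf, ← Ideal.iInf_span_singleton fun i j hij =>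
    (pairwise_coprime_X_sub_C hdist hij).pow]
  simpa [leadingCoeffNth_iterIdeal_eq_span (hin _) (hN _)] using
    Ideal.leadingCoeffNth_biInf (s := Finset.univ) (fun i _ j _ => hcop i j) a

theorem natDegree_prod_X_sub_C_pow {ι : Type*} [Fintype ι] {R : Type*} [CommRing R] [Nontrivial R]
    (c : ι → R) (e : ι → ℕ) : (∏ j, (X - C (c j)) ^ e j).natDegree = ∑ j, e j := by
  rw [natDegree_prod_of_monic _ _ fun j _ => (monic_X_sub_C (c j)).pow (e j)]
  simp only [(monic_X_sub_C _).natDegree_pow, natDegree_X_sub_C, mul_one]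

end Polynomial

theorem stmt14_general (m : ℕ) (I : Fin (m + 1) → Ideal (MvPolynomial (Fin 2) ℂ))
    (Δ : Fin (m + 1) → Set (ℕ × ℕ)) (lam : Fin (m + 1) → ℂ)
    (hin : ∀ j, leadSet (I j) = (Δ j)ᶜ)
    (hsupp : ∀ j, ∀ z ∈ zeroSet (I j), z.2 = lam j)
    (hdist : Function.Injective lam) :
    leadSet (⨅ j, I j) =
      {α : ℕ × ℕ | α.2 < ∑ j, ({β ∈ Δ j | β.1 = α.1}).ncard}ᶜ := by
  ext ⟨a, b⟩
  have hne : ∏ j, (Polynomial.X - Polynomial.C (lam j)) ^ {β ∈ Δ j | β.1 = a}.ncard ≠ 0 :=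
    Finset.prod_ne_zero_iff.2 fun j _ => pow_ne_zero _ (Polynomial.X_sub_C_ne_zero (lam j))
  rw [Set.mem_compl_iff, Set.mem_ofPred_eq, not_lt, Polynomial.mem_leadSet_iff,
    Polynomial.leadingCoeffNth_iterIdeal_iInf hin hsupp hdist,
    Polynomial.exists_mem_span_singleton_natDegree_eq_iff hne,
    Polynomial.natDegree_prod_X_sub_C_pow]

/-- Proposition: C4 addition in the second direction computes the lex Gröbner deformation
of an intersection of ideals supported on distinct horizontal lines. -/
theorem stmt14 (m : ℕ) (I : Fin (m + 1) → Ideal (MvPolynomial (Fin 2) ℂ))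
    (Δ : Fin (m + 1) → Set (ℕ × ℕ)) (lam : Fin (m + 1) → ℂ)
    (hstd : ∀ j, IsStandardSet (Δ j)) (hfin : ∀ j, (Δ j).Finite)
    (hcolen : ∀ j, FiniteDimensional ℂ (MvPolynomial (Fin 2) ℂ ⧸ I j))
    (hin : ∀ j, leadSet (I j) = (Δ j)ᶜ)
    (hsupp : ∀ j, ∀ z ∈ zeroSet (I j), z.2 = lam j)
    (hdist : Function.Injective lam) :
    leadSet (⨅ j, I j) =
      {α : ℕ × ℕ | α.2 < ∑ j, ({β ∈ Δ j | β.1 = α.1}).ncard}ᶜ :=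
  stmt14_general m I Δ lam hin hsupp hdist
end

section
/- Let I ⊆ ℂ[x₁, x₂] be an ideal of finite colength n supported at the origin whose lex standard set is Δ. Then x₂^{h(Δ)} ∈ I, where h(Δ) is the height of Δ (the number of rows). -/
/-!
The corner `(0, h(Δ))` lies outside `Δ`, so it is the lex leading exponent of some nonzero
`f ∈ I`; since `x₁ > x₂`, every monomial of `f` is then a power of `x₂` of degree at most
`h(Δ)`, i.e. `f = g(x₂)` with `g ≠ 0` and `deg g ≤ h(Δ)`. By the Nullstellensatz some `x₂^N`
lies in `I`. The ideal of univariate `p` with `p(x₂) ∈ I` thus contains `x^N`, so it is generated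
by some `x^i`, and `x^i ∣ g` forces `i ≤ h(Δ)`.
-/

open MvPolynomial

/-- The height `h(Δ) = |p₂(Δ)|`. -/
noncomputable def height (Δ : Set (ℕ × ℕ)) : ℕ := (Prod.snd '' Δ).ncard

theorem IsStandardSet.mem_of_le {Δ : Set (ℕ × ℕ)} (hΔ : IsStandardSet Δ) {γ δ : ℕ × ℕ}
    (hle : γ ≤ δ) (hδ : δ ∈ Δ) : γ ∈ Δ := by
  by_contra hγ
  exact hΔ γ hγ (δ - γ) (by rwa [add_tsub_cancel_of_le hle])

theorem IsStandardSet.zero_height_notMem {Δ : Set (ℕ × ℕ)} (hΔ : IsStandardSet Δ)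
    (hfin : Δ.Finite) : (0, height Δ) ∉ Δ := by
  intro hmem
  have hsub : Set.Iic (height Δ) ⊆ Prod.snd '' Δ := fun b hb =>
    ⟨(0, b), hΔ.mem_of_le (Prod.mk_le_mk.2 ⟨le_rfl, hb⟩) hmem, rfl⟩
  have hcard := Set.ncard_le_ncard hsub (hfin.image _)
  rw [← Finset.coe_Iic, Set.ncard_coe_finset, Nat.card_Iic] at hcard
  exact (Nat.lt_succ_self _).not_ge hcard

theorem MvPolynomial.exists_aeval_X_eq {σ R : Type*} [CommSemiring R] (i : σ) {h : ℕ}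
    {f : MvPolynomial σ R} (hf : ∀ d ∈ f.support, d = Finsupp.single i (d i) ∧ d i ≤ h) :
    ∃ g : Polynomial R, g.natDegree ≤ h ∧ Polynomial.aeval (X i) g = f := by
  refine ⟨∑ d ∈ f.support, Polynomial.monomial (d i) (coeff d f),
    Polynomial.natDegree_sum_le_of_forall_le _ _ fun d hd =>
      (Polynomial.natDegree_monomial_le _).trans (hf d hd).2, ?_⟩
  conv_rhs => rw [f.as_sum]
  rw [map_sum]
  refine Finset.sum_congr rfl fun d hd => ?_
  rw [Polynomial.aeval_monomial, algebraMap_eq, X_pow_eq_monomial, C_mul_monomial, mul_one,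
    ← (hf d hd).1]

theorem exists_aeval_X_one_mem_of_mem_leadSet {I : Ideal (MvPolynomial (Fin 2) ℂ)} {h : ℕ}
    (hI : (0, h) ∈ leadSet I) :
    ∃ g : Polynomial ℂ, g ≠ 0 ∧ g.natDegree ≤ h ∧ Polynomial.aeval (X 1) g ∈ I := by
  obtain ⟨f, hfI, hf0, -, hmax⟩ := hI
  have hsupp : ∀ d ∈ f.support, d = Finsupp.single 1 (d 1) ∧ d 1 ≤ h := by
    intro d hd
    have hlex := hmax d hd
    simp only [Prod.Lex.le_iff, expPair, ofLex_toLex] at hlex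
    refine ⟨?_, by omega⟩
    ext j
    fin_cases j
    · simp
      omega
    · simp
  obtain ⟨g, hdeg, rfl⟩ := exists_aeval_X_eq 1 hsupp
  exact ⟨g, by rintro rfl; exact hf0 (map_zero _), hdeg, hfI⟩

theorem X_one_mem_radical_of_zeroSet_eq {I : Ideal (MvPolynomial (Fin 2) ℂ)}
    (hI : zeroSet I = {(0, 0)}) : (X 1 : MvPolynomial (Fin 2) ℂ) ∈ I.radical := by
  rw [← vanishingIdeal_zeroLocus_eq_radical (K := ℂ), mem_vanishingIdeal_iff]
  intro x hx
  have hxI : (x 0, x 1) ∈ zeroSet I := fun p hp => by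
    rw [show ![x 0, x 1] = x from funext fun j => by fin_cases j <;> rfl]
    exact (mem_zeroLocus_iff.mp hx) p hp
  rw [hI, Set.mem_singleton_iff, Prod.mk.injEq] at hxI
  simpa using hxI.2

theorem Polynomial.X_pow_natDegree_mem {K : Type*} [Field K] {J : Ideal (Polynomial K)} {N : ℕ}
    (hXN : X ^ N ∈ J) {g : Polynomial K} (hgJ : g ∈ J) (hg : g ≠ 0) : X ^ g.natDegree ∈ J := by
  obtain ⟨i, -, hassoc⟩ := (dvd_prime_pow prime_X N).mp
    ((Submodule.IsPrincipal.mem_iff_generator_dvd J).mp hXN)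
  have hXi : X ^ i ∈ J := (Submodule.IsPrincipal.mem_iff_generator_dvd J).mpr hassoc.dvd
  have hdvd : X ^ i ∣ g :=
    hassoc.symm.dvd.trans ((Submodule.IsPrincipal.mem_iff_generator_dvd J).mp hgJ)
  refine J.pow_mem_of_pow_mem hXi ?_
  simpa using natDegree_le_of_dvd hdvd hg

theorem stmt16_general (I : Ideal (MvPolynomial (Fin 2) ℂ)) (Δ : Set (ℕ × ℕ))
    (hstd : IsStandardSet Δ) (hfin : Δ.Finite)
    (hsupp : zeroSet I = {(0, 0)})
    (hin : leadSet I = Δᶜ) :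
    (X 1 : MvPolynomial (Fin 2) ℂ) ^ height Δ ∈ I := by
  have hlead : (0, height Δ) ∈ leadSet I := by
    rw [hin]
    exact hstd.zero_height_notMem hfin
  obtain ⟨g, hg0, hdeg, hgI⟩ := exists_aeval_X_one_mem_of_mem_leadSet hlead
  obtain ⟨N, hN⟩ := Ideal.mem_radical_iff.mp (X_one_mem_radical_of_zeroSet_eq hsupp)
  have hXN : (Polynomial.X ^ N : Polynomial ℂ) ∈ I.comap (Polynomial.aeval (X 1)) := by
    simpa using hN
  have hXh := (I.comap (Polynomial.aeval (X 1))).pow_mem_of_pow_mem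
    (Polynomial.X_pow_natDegree_mem hXN hgI hg0) hdeg
  simpa using hXh

/-- For an ideal of colength `n` supported at the origin with lex standard set `Δ`,
the pure power `x₂^{h(Δ)}` lies in the ideal. -/
theorem stmt16 (n : ℕ) (I : Ideal (MvPolynomial (Fin 2) ℂ)) (Δ : Set (ℕ × ℕ))
    (hstd : IsStandardSet Δ) (hfin : Δ.Finite)
    (hcolen : FiniteDimensional ℂ (MvPolynomial (Fin 2) ℂ ⧸ I))
    (hn : Module.finrank ℂ (MvPolynomial (Fin 2) ℂ ⧸ I) = n)
    (hsupp : zeroSet I = {(0, 0)})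
    (hin : leadSet I = Δᶜ) :
    (X 1 : MvPolynomial (Fin 2) ℂ) ^ height Δ ∈ I :=
  stmt16_general I Δ hstd hfin hsupp hin
end
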